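/- For every m ≥ 1 there exists a constant C : ℕ such that for every L : ℕ, every nonempty finite set P of points of ℤ^m all of whose coordinates lie in the interval [0, L], and every p0 ∈ P, there exists a solution trajectory for (P, p0) in the racetrack model on ℤ^m having at most C·(L+1)^m configurations. -/

import Mathlib

/-- A trajectory of `k` configurations in the racetrack model on `ℤ^m`. -/
def IsTrajectory (m k : ℕ) (c : Fin k → (Fin m → ℤ) × (Fin m → ℤ)) : Prop :=
  ∀ (t : ℕ) (h : t + 1 < k),
    (c ⟨t + 1, h⟩).1 = (c ⟨t, by omega⟩).1 + (c ⟨t + 1, h⟩).2 ∧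
    ∀ j : Fin m, |(c ⟨t + 1, h⟩).2 j - (c ⟨t, by omega⟩).2 j| ≤ 1

/-- A solution trajectory for `(P, p0)`: a trajectory of `k ≥ 1` configurations
starting and ending at `p0` with zero velocity, visiting every point of `P`. -/
def IsSolution (m : ℕ) (P : Finset (Fin m → ℤ)) (p0 : Fin m → ℤ)
    (k : ℕ) (c : Fin k → (Fin m → ℤ) × (Fin m → ℤ)) : Prop :=
  IsTrajectory m k c ∧ 1 ≤ k ∧
  (∀ h : 0 < k,
    (c ⟨0, h⟩).1 = p0 ∧ (c ⟨0, h⟩).2 = 0 ∧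
    (c ⟨k - 1, Nat.sub_lt h one_pos⟩).1 = p0 ∧
    (c ⟨k - 1, Nat.sub_lt h one_pos⟩).2 = 0) ∧
  (∀ q ∈ P, ∃ t : Fin k, (c t).1 = q)

/-!
The walk `n ↦ (w (⌊n / P^j⌋))_j`, where `P = 2L + 2` and `w` is the triangle wave
`0, 1, …, L, L, …, 1, 0` of period `P`, is a reflected base-`P` counter: it is periodic with
period `P^m`, it passes through every point of `[0, L]^m` (read the digits of `n`), and since
`⌊(n+1)/d⌋ - ⌊n/d⌋ ∈ {0, 1}` each coordinate moves by at most one per step. Started at `p0`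
and followed for one period, it becomes a racetrack trajectory by alternating one move with
one full stop, which costs `2 P^m + 1 ≤ (2^(m+1) + 1) (L+1)^m` configurations.
-/

open Function

def triangleWave (L k : ℕ) : ℤ := (min (k % (2 * L + 2)) (2 * L + 1 - k % (2 * L + 2)) : ℕ)

lemma triangleWave_periodic (L : ℕ) : Periodic (triangleWave L) (2 * L + 2) := by
  intro k
  simp [triangleWave]

lemma triangleWave_of_le {L d : ℕ} (hd : d ≤ L) : triangleWave L d = d := by
  rw [triangleWave, Nat.mod_eq_of_lt (by omega)]
  omega

lemma abs_triangleWave_succ_sub_le (L k : ℕ) : |triangleWave L (k + 1) - triangleWave L k| ≤ 1 := by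
  have hr := Nat.mod_lt k (show 0 < 2 * L + 2 by omega)
  have h1 : 1 % (2 * L + 2) = 1 := Nat.mod_eq_of_lt (by omega)
  rw [triangleWave, triangleWave, Nat.add_mod_eq_ite, h1, abs_le]
  split_ifs <;> omega

lemma abs_comp_succ_div_sub_le {f : ℕ → ℤ} (hf : ∀ k, |f (k + 1) - f k| ≤ 1) (n d : ℕ) :
    |f ((n + 1) / d) - f (n / d)| ≤ 1 := by
  rw [Nat.succ_div]
  split_ifs
  · exact hf _
  · simp

def boxTour (m L n : ℕ) (j : Fin m) : ℤ := triangleWave L (n / (2 * L + 2) ^ (j : ℕ))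

lemma abs_boxTour_succ_sub_le (m L n : ℕ) (j : Fin m) :
    |boxTour m L (n + 1) j - boxTour m L n j| ≤ 1 :=
  abs_comp_succ_div_sub_le (abs_triangleWave_succ_sub_le L) n _

lemma boxTour_periodic (m L : ℕ) : Periodic (boxTour m L) ((2 * L + 2) ^ m) := by
  intro n
  funext j
  obtain ⟨e, he⟩ : ∃ e, m = j + (e + 1) := ⟨m - j - 1, by omega⟩
  have hpow : (2 * L + 2) ^ m = (2 * L + 2) ^ (j : ℕ) * ((2 * L + 2) ^ e * (2 * L + 2)) := by
    rw [congrArg ((2 * L + 2) ^ ·) he, pow_add, pow_succ]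
  rw [boxTour, boxTour, hpow, Nat.add_mul_div_left _ _ (by positivity)]
  exact_mod_cast (triangleWave_periodic L).nat_mul ((2 * L + 2) ^ e) _

lemma exists_boxTour_eq {m L : ℕ} (x : Fin m → ℤ) (hx : ∀ j, 0 ≤ x j ∧ x j ≤ L) :
    ∃ n < (2 * L + 2) ^ m, boxTour m L n = x := by
  let digits : Fin m → Fin (2 * L + 2) := fun j => ⟨(x j).toNat, by have := hx j; omega⟩
  refine ⟨finFunctionFinEquiv digits, Fin.isLt _, funext fun j => ?_⟩
  have hdigit := finFunctionFinEquiv_symm_apply_val (finFunctionFinEquiv digits) j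
  rw [Equiv.symm_apply_apply] at hdigit
  have hxj := hx j
  rw [boxTour, ← (triangleWave_periodic L).map_mod_nat, ← hdigit,
    triangleWave_of_le (show (x j).toNat ≤ L by omega)]
  simp [hxj.1]

lemma Function.Periodic.exists_lt_add_eq {α : Type*} {w : ℕ → α} {M i₀ i : ℕ}
    (hw : Periodic w M) (hi₀ : i₀ < M) (hi : i < M) : ∃ n < M, w (i₀ + n) = w i := by
  rcases le_or_gt i₀ i with h | h
  · exact ⟨i - i₀, by omega, by rw [Nat.add_sub_cancel' h]⟩
  · exact ⟨i + M - i₀, by omega, by rw [show i₀ + (i + M - i₀) = i + M by omega, hw]⟩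

/-- At time `2n` the car rests at `q n`; at time `2n + 1` it has just moved to `q (n + 1)`. -/
def stopAndGo {V : Type*} [AddGroup V] (q : ℕ → V) (t : ℕ) : V × V :=
  (q ((t + 1) / 2), q ((t + 1) / 2) - q (t / 2))

lemma stopAndGo_even {V : Type*} [AddGroup V] (q : ℕ → V) (n : ℕ) :
    stopAndGo q (2 * n) = (q n, 0) := by
  simp [stopAndGo, show (2 * n + 1) / 2 = n by omega]

lemma isTrajectory_stopAndGo {m : ℕ} {q : ℕ → Fin m → ℤ}
    (hq : ∀ n j, |q (n + 1) j - q n j| ≤ 1) (k : ℕ) :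
    IsTrajectory m k (fun t => stopAndGo q t) := by
  intro t _
  refine ⟨by simp [stopAndGo], fun j => ?_⟩
  rcases Nat.even_or_odd' t with ⟨n, rfl | rfl⟩
  · simpa [stopAndGo, show (2 * n + 1) / 2 = n by omega, show (2 * n + 1 + 1) / 2 = n + 1 by omega]
      using hq n j
  · rw [← abs_neg]
    simpa [stopAndGo, show (2 * n + 1 + 1) / 2 = n + 1 by omega,
      show (2 * n + 1 + 1 + 1) / 2 = n + 1 by omega, show (2 * n + 1) / 2 = n by omega] using hq n j

lemma isSolution_stopAndGo {m M : ℕ} {P : Finset (Fin m → ℤ)} {p₀ : Fin m → ℤ}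
    {q : ℕ → Fin m → ℤ} (hq : ∀ n j, |q (n + 1) j - q n j| ≤ 1) (hq₀ : q 0 = p₀)
    (hqM : q M = p₀) (hP : ∀ x ∈ P, ∃ n ≤ M, q n = x) :
    IsSolution m P p₀ (2 * M + 1) (fun t => stopAndGo q t) := by
  refine ⟨isTrajectory_stopAndGo hq _, by omega, fun _ => ?_, fun x hx => ?_⟩
  · have hstart : stopAndGo q 0 = (q 0, 0) := stopAndGo_even q 0
    simp [hstart, stopAndGo_even, hq₀, hqM]
  · obtain ⟨n, hn, rfl⟩ := hP x hx
    exact ⟨⟨2 * n, by omega⟩, by simp [stopAndGo_even]⟩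

theorem vtsp_solution_exists_general (m : ℕ) :
    ∃ C : ℕ, ∀ (L : ℕ) (P : Finset (Fin m → ℤ)), P.Nonempty →
      (∀ q ∈ P, ∀ j : Fin m, 0 ≤ q j ∧ q j ≤ (L : ℤ)) →
      ∀ p0 ∈ P, ∃ k ≤ C * (L + 1) ^ m,
        ∃ c : Fin k → (Fin m → ℤ) × (Fin m → ℤ), IsSolution m P p0 k c := by
  refine ⟨2 ^ (m + 1) + 1, fun L P _ hbox p₀ hp₀ => ?_⟩
  set M := (2 * L + 2) ^ m
  obtain ⟨i₀, hi₀, htour₀⟩ := exists_boxTour_eq p₀ (hbox p₀ hp₀)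
  have hperiodic := boxTour_periodic m L
  have hvisit : ∀ x ∈ P, ∃ n ≤ M, boxTour m L (i₀ + n) = x := by
    intro x hx
    obtain ⟨i, hi, rfl⟩ := exists_boxTour_eq x (hbox x hx)
    obtain ⟨n, hn, hxn⟩ := hperiodic.exists_lt_add_eq hi₀ hi
    exact ⟨n, hn.le, hxn⟩
  refine ⟨2 * M + 1, ?_, _, isSolution_stopAndGo (q := fun n => boxTour m L (i₀ + n))
    (fun n => abs_boxTour_succ_sub_le m L _) htour₀ (by rw [hperiodic, htour₀]) hvisit⟩
  calc 2 * M + 1 = 2 ^ (m + 1) * (L + 1) ^ m + 1 := by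
        rw [show M = (2 * (L + 1)) ^ m by ring, mul_pow, pow_succ]; ring
    _ ≤ (2 ^ (m + 1) + 1) * (L + 1) ^ m := by nlinarith [Nat.one_le_pow m (L + 1) (by omega)]

/-- For cities with coordinates in `[0, L]` in `ℤ^m`, there is always a
solution trajectory of `O((L+1)^m)` configurations. -/
theorem vtsp_solution_exists (m : ℕ) (hm : 1 ≤ m) :
    ∃ C : ℕ, ∀ (L : ℕ) (P : Finset (Fin m → ℤ)), P.Nonempty →
      (∀ q ∈ P, ∀ j : Fin m, 0 ≤ q j ∧ q j ≤ (L : ℤ)) →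
      ∀ p0 ∈ P, ∃ k ≤ C * (L + 1) ^ m,
        ∃ c : Fin k → (Fin m → ℤ) × (Fin m → ℤ), IsSolution m P p0 k c :=
  vtsp_solution_exists_general m
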